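/- arXiv:2605.17395 — 4 statements merged into one kernel-verified Lean document; each statement's English description precedes it below -/
import Mathlib

section
/- Fix b ∈ ℝ and ω > 0. For every y ∈ ℝ² with y ≠ 0, every η ∈ ℝ², and every t ∈ ℝ such that x^t(y,η) ≠ 0, one has x^t(y,η) ∧ ξ^t(y,η) = y ∧ η, where u ∧ v := u₁v₂ − u₂v₁. -/
/-- The Aharonov–Bohm vector potential with flux `b`:
`A(x) = (−b x₂/|x|², b x₁/|x|²)` for `x ∈ ℝ² \ {0}`. -/
noncomputable def A (b : ℝ) (x : ℝ × ℝ) : ℝ × ℝ :=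
  (-b * x.2 / (x.1 ^ 2 + x.2 ^ 2), b * x.1 / (x.1 ^ 2 + x.2 ^ 2))

/-- The wedge product `u ∧ v = u₁v₂ − u₂v₁` on `ℝ²`. -/
def wedge (u v : ℝ × ℝ) : ℝ := u.1 * v.2 - u.2 * v.1

/-- The Euclidean inner product on `ℝ²`. -/
def dot (u v : ℝ × ℝ) : ℝ := u.1 * v.1 + u.2 * v.2

/-- The squared Euclidean norm on `ℝ²`. -/
def normSq2 (u : ℝ × ℝ) : ℝ := u.1 ^ 2 + u.2 ^ 2

/-- The classical trajectory `x^t(y,η) = cos(ωt)·y + (sin(ωt)/ω)·(η − A(y))`. -/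
noncomputable def traj (b ω : ℝ) (y η : ℝ × ℝ) (t : ℝ) : ℝ × ℝ :=
  Real.cos (ω * t) • y + (Real.sin (ω * t) / ω) • (η - A b y)

/-- The momentum `ξ^t(y,η) = (d/dt)x^t + A(x^t)`, defined when `x^t ≠ 0`. -/
noncomputable def xi (b ω : ℝ) (y η : ℝ × ℝ) (t : ℝ) : ℝ × ℝ :=
  deriv (traj b ω y η) t + A b (traj b ω y η t)


lemma sq_ne_zero {u : ℝ × ℝ} (hu : u ≠ 0) : u.1 ^ 2 + u.2 ^ 2 ≠ 0 := by
  intro h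
  apply hu
  have h1 : u.1 = 0 := by nlinarith [sq_nonneg u.1, sq_nonneg u.2]
  have h2 : u.2 = 0 := by nlinarith [sq_nonneg u.1, sq_nonneg u.2]
  exact Prod.ext h1 h2

lemma wedge_add_right (u v w : ℝ × ℝ) : wedge u (v + w) = wedge u v + wedge u w := by
  simp [wedge, Prod.fst_add, Prod.snd_add]; ring

lemma wedge_sub_right (u v w : ℝ × ℝ) : wedge u (v - w) = wedge u v - wedge u w := by
  simp [wedge, Prod.fst_sub, Prod.snd_sub]; ring

lemma wedge_bilin (a a' e e' : ℝ) (u u' : ℝ × ℝ) :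
    wedge (a • u + a' • u') (e • u + e' • u') = (a * e' - a' * e) * wedge u u' := by
  simp [wedge, Prod.fst_add, Prod.snd_add, Prod.smul_fst, Prod.smul_snd, smul_eq_mul]; ring

lemma wedge_A (b : ℝ) {X : ℝ × ℝ} (hX : X ≠ 0) : wedge X (A b X) = b := by
  have h := sq_ne_zero hX
  simp only [wedge, A]
  field_simp
  ring

/-- If `x^t(y,η) ≠ 0` then `x^t ∧ ξ^t = y ∧ η`. -/
theorem wedge_traj_xi (b ω : ℝ) (hω : 0 < ω)
    (y : ℝ × ℝ) (hy : y ≠ 0) (η : ℝ × ℝ) (t : ℝ)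
    (hxt : traj b ω y η t ≠ 0) :
    wedge (traj b ω y η t) (xi b ω y η t) = wedge y η := by
  have hωne : ω ≠ 0 := hω.ne'
  set c := Real.cos (ω * t) with hc
  set s := Real.sin (ω * t) with hs
  set v := η - A b y with hv
  have hD : HasDerivAt (traj b ω y η)
      ((-s * (ω * 1)) • y + ((c * (ω * 1)) / ω) • v) t := by
    exact (((hasDerivAt_id t).const_mul ω).cos.smul_const y).add
      ((((hasDerivAt_id t).const_mul ω).sin.div_const ω).smul_const v)
  have hDeq : deriv (traj b ω y η) t = (-s * (ω * 1)) • y + ((c * (ω * 1)) / ω) • v :=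
    hD.deriv
  have hX : traj b ω y η t = c • y + (s / ω) • v := rfl
  calc wedge (traj b ω y η t) (xi b ω y η t)
      = wedge (traj b ω y η t) (deriv (traj b ω y η) t)
        + wedge (traj b ω y η t) (A b (traj b ω y η t)) := wedge_add_right _ _ _
    _ = (c * ((c * (ω * 1)) / ω) - (s / ω) * (-s * (ω * 1))) * wedge y v + b := by
        rw [hDeq, wedge_A b hxt, hX, wedge_bilin]
    _ = wedge y v + b := by
        have : c * ((c * (ω * 1)) / ω) - (s / ω) * (-s * (ω * 1)) = 1 := by
          field_simp
          nlinarith [Real.sin_sq_add_cos_sq (ω * t)]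
        rw [this, one_mul]
    _ = wedge y η := by
        rw [hv, wedge_sub_right, wedge_A b hy]; ring
end

section
/- Fix b ∈ ℝ and ω > 0. Let y ∈ ℝ² with y ≠ 0, η ∈ ℝ², and t ≥ 0, and assume x^s(y,η) ≠ 0 for all s ∈ [0,t]. If θ : [0,t] → ℝ is a continuous function such that x^s(y,η) = |x^s(y,η)|·(cos θ(s), sin θ(s)) for all s ∈ [0,t], then (y ∧ η − b)·∫₀ᵗ |x^s(y,η)|⁻² ds = θ(t) − θ(0), where u ∧ v := u₁v₂ − u₂v₁. -/
/-!
Identify `ℝ²` with `ℂ`. Since `y ∧ A(y) = b` and `cos² + sin² = 1`, the trajectory `z` has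
constant angular momentum `Im (z' z̄) = y ∧ η − b`, so `Im (z'/z) = (y ∧ η − b) / |z|²`.
Integrating the logarithmic derivative gives `z(s) = z(0) exp ∫₀ˢ z'/z`, hence
`θ(0) + Im ∫₀ˢ z'/z` is a continuous lift of `z/|z|` through `ℝ → S¹` agreeing with `θ` at `0`;
by uniqueness of lifts along a covering map it is `θ`.
-/

open Set Complex ComplexConjugate MeasureTheory

theorem Complex.exp_mul_I_eq_div_norm {w : ℂ} {θ : ℝ} (hw : w ≠ 0)
    (h : w = ‖w‖ * exp (θ * I)) : exp (θ * I) = w / ‖w‖ := by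
  rw [eq_div_iff (ofReal_ne_zero.2 (norm_ne_zero_iff.2 hw)), mul_comm, ← h]

theorem Complex.exp_im_mul_I (w : ℂ) : exp (w.im * I) = exp w / ‖exp w‖ := by
  refine exp_mul_I_eq_div_norm (exp_ne_zero w) ?_
  rw [norm_exp, ofReal_exp, ← exp_add, re_add_im]

theorem Complex.im_div_eq_im_mul_conj_div_normSq (w z : ℂ) :
    (w / z).im = (w * conj z).im / normSq z := by
  simp only [div_im, mul_im, conj_re, conj_im]
  ring

theorem eqOn_mul_cexp_integral_div {z z' : ℝ → ℂ} {a b : ℝ}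
    (hz : ∀ s, HasDerivAt z (z' s) s) (hz' : Continuous z') (hne : ∀ s ∈ Icc a b, z s ≠ 0) :
    ∀ s ∈ Icc a b, z s = z a * exp (∫ u in a..s, z' u / z u) := by
  set L : ℝ → ℂ := fun s => ∫ u in a..s, z' u / z u
  have hzc : Continuous z := continuous_iff_continuousAt.2 fun s => (hz s).continuousAt
  have hU : IsOpen {s | z s ≠ 0} := isOpen_ne_fun hzc continuous_const
  have hcont : ContinuousOn (fun u => z' u / z u) {s | z s ≠ 0} :=
    hz'.continuousOn.div hzc.continuousOn fun _ h => h
  have hL : ∀ s ∈ Icc a b, HasDerivAt L (z' s / z s) s := fun s hs =>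
    intervalIntegral.integral_hasDerivAt_right
      (hcont.mono (uIcc_of_le hs.1 ▸ (Icc_subset_Icc_right hs.2).trans hne)).intervalIntegrable
      (hcont.stronglyMeasurableAtFilter hU s (hne s hs))
      (hcont.continuousAt (hU.mem_nhds (hne s hs)))
  have hconst : ∀ s ∈ Icc a b, z s * exp (-L s) = z a * exp (-L a) := by
    refine constant_of_has_deriv_right_zero (fun s hs => ?_) fun s hs => ?_
    · exact ((hz s).continuousAt.mul (hL s hs).continuousAt.neg.cexp).continuousWithinAt
    · have hs' : s ∈ Icc a b := Ico_subset_Icc_self hs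
      have h : HasDerivWithinAt (fun u => z u * exp (-L u))
          (z' s * exp (-L s) + z s * (exp (-L s) * -(z' s / z s))) (Ici s) s :=
        ((hz s).mul (hL s hs').neg.cexp).hasDerivWithinAt
      have h0 : z' s * exp (-L s) + z s * (exp (-L s) * -(z' s / z s)) = 0 := by
        field_simp [hne s hs']
        ring
      rwa [h0] at h
  intro s hs
  have h := hconst s hs
  simp only [L, intervalIntegral.integral_same, neg_zero, exp_zero, mul_one] at h
  rw [← h, mul_assoc, ← exp_add, neg_add_cancel, exp_zero, mul_one]

theorem mul_integral_inv_normSq_eq_sub_of_polar {z z' : ℝ → ℂ} {a b C : ℝ} {θ : ℝ → ℝ}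
    (hab : a ≤ b) (hz : ∀ s, HasDerivAt z (z' s) s) (hz' : Continuous z')
    (hne : ∀ s ∈ Icc a b, z s ≠ 0) (hC : ∀ s ∈ Icc a b, (z' s * conj (z s)).im = C)
    (hθ : ContinuousOn θ (Icc a b)) (hpolar : ∀ s ∈ Icc a b, z s = ‖z s‖ * exp (θ s * I)) :
    C * ∫ s in a..b, (normSq (z s))⁻¹ = θ b - θ a := by
  set L : ℝ → ℂ := fun s => ∫ u in a..s, z' u / z u
  have hzc : Continuous z := continuous_iff_continuousAt.2 fun s => (hz s).continuousAt
  have hint : IntegrableOn (fun u => z' u / z u) (uIcc a b) := by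
    rw [uIcc_of_le hab]
    exact (hz'.continuousOn.div hzc.continuousOn hne).integrableOn_Icc
  have hLim : ∀ s ∈ Icc a b, (L s).im = C * ∫ u in a..s, (normSq (z u))⁻¹ := fun s hs => by
    have hsub : uIcc a s ⊆ Icc a b := uIcc_of_le hs.1 ▸ Icc_subset_Icc_right hs.2
    have hints : IntervalIntegrable (fun u => z' u / z u) volume a s :=
      (hint.mono_set (uIcc_of_le hab ▸ hsub)).intervalIntegrable
    rw [← intervalIntegral.integral_const_mul, ← RCLike.im_to_complex,
      ← intervalIntegral.intervalIntegral_im hints]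
    refine intervalIntegral.integral_congr fun u hu => ?_
    rw [RCLike.im_to_complex, im_div_eq_im_mul_conj_div_normSq, hC u (hsub hu), div_eq_mul_inv]
  have hLcont : ContinuousOn (fun s => (L s).im) (Icc a b) :=
    continuous_im.comp_continuousOn
      (uIcc_of_le hab ▸ intervalIntegral.continuousOn_primitive_interval hint)
  have hlift : EqOn θ (fun s => θ a + (L s).im) (Icc a b) := by
    refine Circle.isCoveringMap_exp.eqOn_of_comp_eqOn isPreconnected_Icc hθ
      (continuousOn_const.add hLcont) (fun s hs => ?_) (left_mem_Icc.2 hab) (by simp [L])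
    have ha := left_mem_Icc.2 hab
    have hzs : z s = z a * exp (L s) := eqOn_mul_cexp_integral_div hz hz' hne s hs
    apply Circle.ext
    simp only [Function.comp_apply, Circle.coe_exp, ofReal_add, add_mul, exp_add, exp_im_mul_I,
      exp_mul_I_eq_div_norm (hne s hs) (hpolar s hs),
      exp_mul_I_eq_div_norm (hne a ha) (hpolar a ha)]
    rw [hzs, norm_mul, ofReal_mul, mul_div_mul_comm]
  rw [← hLim b (right_mem_Icc.2 hab), hlift (right_mem_Icc.2 hab)]
  ring

theorem mul_integral_inv_normSq2_eq_sub_of_polar {γ γ' : ℝ → ℝ × ℝ} {a b C : ℝ} {θ : ℝ → ℝ}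
    (hab : a ≤ b) (hγ : ∀ s, HasDerivAt γ (γ' s) s) (hγ' : Continuous γ')
    (hne : ∀ s ∈ Icc a b, γ s ≠ 0) (hC : ∀ s ∈ Icc a b, wedge (γ s) (γ' s) = C)
    (hθ : ContinuousOn θ (Icc a b))
    (hpolar : ∀ s ∈ Icc a b, γ s = √(normSq2 (γ s)) • (Real.cos (θ s), Real.sin (θ s))) :
    C * ∫ s in a..b, (normSq2 (γ s))⁻¹ = θ b - θ a := by
  set e : ℝ × ℝ →L[ℝ] ℂ := equivRealProdCLM.symm.toContinuousLinearMap
  have he : ∀ p, e p = p.1 + p.2 * I := equivRealProdCLM_symm_apply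
  have hnormSq : ∀ p, normSq (e p) = normSq2 p := fun p => by
    simp only [he, normSq_add_mul_I, normSq2]
  have hwedge : ∀ p q, (e q * conj (e p)).im = wedge p q := fun p q => by
    simp only [he, mul_im, conj_re, conj_im, add_re, add_im, mul_re, ofReal_re, ofReal_im,
      I_re, I_im, wedge]
    ring
  have hpolar' : ∀ s ∈ Icc a b, e (γ s) = ‖e (γ s)‖ * exp (θ s * I) := fun s hs => by
    conv_lhs => rw [hpolar s hs]
    rw [map_smul, he, norm_def, hnormSq, exp_mul_I, ← ofReal_cos, ← ofReal_sin, real_smul]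
  have hne' : ∀ s ∈ Icc a b, e (γ s) ≠ 0 := fun s hs =>
    (map_ne_zero_iff _ equivRealProdCLM.symm.injective).2 (hne s hs)
  have := mul_integral_inv_normSq_eq_sub_of_polar hab
    (fun s => e.hasFDerivAt.comp_hasDerivAt s (hγ s)) (e.continuous.comp hγ') hne'
    (fun s hs => (hwedge _ _).trans (hC s hs)) hθ hpolar'
  simpa only [Function.comp_apply, hnormSq] using this

theorem wedge_smul_add_smul (u v : ℝ × ℝ) (c d c' d' : ℝ) :
    wedge (c • u + d • v) (c' • u + d' • v) = (c * d' - d * c') * wedge u v := by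
  simp only [wedge, Prod.fst_add, Prod.snd_add, Prod.smul_fst, Prod.smul_snd, smul_eq_mul]
  ring

theorem wedge_A_self (b : ℝ) {y : ℝ × ℝ} (hy : y ≠ 0) : wedge y (A b y) = b := by
  have hy2 : y.1 ^ 2 + y.2 ^ 2 ≠ 0 := by
    contrapose! hy
    obtain ⟨h1, h2⟩ := (add_eq_zero_iff_of_nonneg (sq_nonneg _) (sq_nonneg _)).1 hy
    exact Prod.ext (pow_eq_zero_iff two_ne_zero |>.1 h1) (pow_eq_zero_iff two_ne_zero |>.1 h2)
  simp only [wedge, A]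
  field_simp
  ring

noncomputable def trajDeriv (b ω : ℝ) (y η : ℝ × ℝ) (t : ℝ) : ℝ × ℝ :=
  (-(ω * Real.sin (ω * t))) • y + Real.cos (ω * t) • (η - A b y)

theorem hasDerivAt_traj (b : ℝ) {ω : ℝ} (hω : ω ≠ 0) (y η : ℝ × ℝ) (t : ℝ) :
    HasDerivAt (traj b ω y η) (trajDeriv b ω y η t) t := by
  have hωt : HasDerivAt (fun s => ω * s) ω t := by simpa using (hasDerivAt_id t).const_mul ω
  have hcos := hωt.cos.smul_const y
  have hsin := (hωt.sin.div_const ω).smul_const (η - A b y)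
  have hv : (-Real.sin (ω * t) * ω) • y + (Real.cos (ω * t) * ω / ω) • (η - A b y) =
      trajDeriv b ω y η t := by
    rw [trajDeriv, mul_div_cancel_right₀ _ hω, neg_mul, mul_comm]
  exact hv ▸ hcos.add hsin

theorem continuous_trajDeriv (b ω : ℝ) (y η : ℝ × ℝ) : Continuous (trajDeriv b ω y η) := by
  unfold trajDeriv
  fun_prop

theorem wedge_traj_trajDeriv (b : ℝ) {ω : ℝ} (hω : ω ≠ 0) {y : ℝ × ℝ} (hy : y ≠ 0)
    (η : ℝ × ℝ) (t : ℝ) : wedge (traj b ω y η t) (trajDeriv b ω y η t) = wedge y η - b := by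
  have hsub : wedge y (η - A b y) = wedge y η - b := by
    have h := wedge_A_self b hy
    simp only [wedge, Prod.fst_sub, Prod.snd_sub] at h ⊢
    linarith
  have hdet : Real.cos (ω * t) * Real.cos (ω * t) - Real.sin (ω * t) / ω * -(ω * Real.sin (ω * t))
      = 1 := by
    field_simp
    linear_combination Real.sin_sq_add_cos_sq (ω * t)
  rw [traj, trajDeriv, wedge_smul_add_smul, hdet, one_mul, hsub]

/-- If `θ` is a continuous angle function for the trajectory on `[0,t]`, then
`(y ∧ η − b)·∫₀ᵗ |x^s|⁻² ds = θ(t) − θ(0)`. -/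
theorem winding_integral (b ω : ℝ) (hω : 0 < ω)
    (y : ℝ × ℝ) (hy : y ≠ 0) (η : ℝ × ℝ) (t : ℝ) (ht : 0 ≤ t)
    (hne : ∀ s ∈ Set.Icc (0 : ℝ) t, traj b ω y η s ≠ 0)
    (θ : ℝ → ℝ) (hθcont : ContinuousOn θ (Set.Icc (0 : ℝ) t))
    (hθ : ∀ s ∈ Set.Icc (0 : ℝ) t,
      traj b ω y η s =
        Real.sqrt (normSq2 (traj b ω y η s)) •
          (Real.cos (θ s), Real.sin (θ s))) :
    (wedge y η - b) * ∫ s in (0 : ℝ)..t, (normSq2 (traj b ω y η s))⁻¹ =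
      θ t - θ 0 :=
  mul_integral_inv_normSq2_eq_sub_of_polar ht (hasDerivAt_traj b hω.ne' y η)
    (continuous_trajDeriv b ω y η) hne (fun s _ => wedge_traj_trajDeriv b hω.ne' hy η s) hθcont hθ
end

section
/- Fix b ∈ ℝ, ω > 0, and 𝓑 > 0. Let y ∈ ℝ² with y ≠ 0 and η ∈ ℝ². Then for every t ∈ ℝ with x^t(y,η) ≠ 0, the 2×2 complex matrix Z(t,y,η) := cos(ωt)·I + (sin(ωt)/ω)·A_x(x^t) − i𝓑·(sin(ωt)/ω)·I is invertible. -/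
/-- The Jacobian matrix of the Aharonov–Bohm potential `A` at `x ≠ 0`. -/
noncomputable def Amat (b : ℝ) (x : ℝ × ℝ) : Matrix (Fin 2) (Fin 2) ℝ :=
  (b / (normSq2 x) ^ 2) •
    !![2 * x.1 * x.2, x.2 ^ 2 - x.1 ^ 2; x.2 ^ 2 - x.1 ^ 2, -(2 * x.1 * x.2)]

/-- The Jacobian of the trajectory with respect to `η`, as a complex matrix:
`x^t_η = (sin(ωt)/ω)·I`. -/
noncomputable def xEta (ω : ℝ) (t : ℝ) : Matrix (Fin 2) (Fin 2) ℂ :=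
  ((Real.sin (ω * t) / ω : ℝ) : ℂ) • (1 : Matrix (Fin 2) (Fin 2) ℂ)

/-- The Jacobian of the momentum with respect to `η`, as a complex matrix:
`ξ^t_η = cos(ωt)·I + (sin(ωt)/ω)·A_x(x^t)`. -/
noncomputable def xiEta (b ω : ℝ) (y η : ℝ × ℝ) (t : ℝ) :
    Matrix (Fin 2) (Fin 2) ℂ :=
  ((Real.cos (ω * t) : ℝ) : ℂ) • (1 : Matrix (Fin 2) (Fin 2) ℂ) +
    ((Real.sin (ω * t) / ω : ℝ) : ℂ) •
      (Amat b (traj b ω y η t)).map (fun a => (a : ℂ))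

/-- The matrix `Z(t,y,η) = ξ^t_η − i𝓑·x^t_η
  = cos(ωt)·I + (sin(ωt)/ω)·A_x(x^t) − i𝓑·(sin(ωt)/ω)·I`. -/
noncomputable def Zmat (b ω 𝓑 : ℝ) (y η : ℝ × ℝ) (t : ℝ) :
    Matrix (Fin 2) (Fin 2) ℂ :=
  xiEta b ω y η t - (Complex.I * (𝓑 : ℂ)) • xEta ω t


/- `Z = λ·I + s·A_x(x^t)` with `λ = cos(ωt) − i𝓑 s` and `s = sin(ωt)/ω`, where the Jacobian
`A_x` is real and traceless, so `det Z = λ² + s² det A_x` with `det A_x ≤ 0`.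
The imaginary part `−2𝓑 cos(ωt) s` of this determinant vanishes only if `cos(ωt) = 0` or `s = 0`,
and in either case the real part is nonzero, since `cos(ωt)` and `s` cannot vanish together. -/

open Complex Matrix

theorem Matrix.det_smul_one_add_of_trace_eq_zero {R : Type*} [CommRing R] (a : R)
    (M : Matrix (Fin 2) (Fin 2) R) (hM : M.trace = 0) : (a • 1 + M).det = a ^ 2 + M.det := by
  rw [trace_fin_two] at hM
  simp [det_fin_two]
  linear_combination a * hM

theorem trace_Amat (b : ℝ) (x : ℝ × ℝ) : (Amat b x).trace = 0 := by
  simp [Amat, trace_fin_two]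

theorem det_Amat_nonpos (b : ℝ) (x : ℝ × ℝ) : (Amat b x).det ≤ 0 := by
  have h : (Amat b x).det =
      -((b / normSq2 x ^ 2) ^ 2 * ((2 * x.1 * x.2) ^ 2 + (x.2 ^ 2 - x.1 ^ 2) ^ 2)) := by
    simp [Amat, det_fin_two]
    ring
  rw [h, neg_nonpos]
  positivity

theorem Zmat_eq (b ω 𝓑 : ℝ) (y η : ℝ × ℝ) (t : ℝ) :
    Zmat b ω 𝓑 y η t =
      ((Real.cos (ω * t) : ℂ) - I * 𝓑 * ((Real.sin (ω * t) / ω : ℝ) : ℂ)) • 1 +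
        ((Real.sin (ω * t) / ω : ℝ) : ℂ) • (Amat b (traj b ω y η t)).map ((↑) : ℝ → ℂ) := by
  simp only [Zmat, xiEta, xEta, sub_smul, smul_smul]
  abel

theorem det_Zmat (b ω 𝓑 : ℝ) (y η : ℝ × ℝ) (t : ℝ) :
    (Zmat b ω 𝓑 y η t).det =
      ((Real.cos (ω * t) : ℂ) - I * 𝓑 * ((Real.sin (ω * t) / ω : ℝ) : ℂ)) ^ 2 +
        ((Real.sin (ω * t) / ω : ℝ) : ℂ) ^ 2 * ((Amat b (traj b ω y η t)).det : ℂ) := by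
  set M := Amat b (traj b ω y η t)
  have hmap : (M.map ((↑) : ℝ → ℂ)).det = (M.det : ℂ) := (ofRealHom.map_det M).symm
  have htrace : (M.map ((↑) : ℝ → ℂ)).trace = 0 :=
    (AddMonoidHom.map_trace ofRealHom M).symm.trans (by rw [trace_Amat, map_zero])
  rw [Zmat_eq, det_smul_one_add_of_trace_eq_zero _ _ (by rw [trace_smul, htrace, smul_zero]),
    det_smul, hmap, Fintype.card_fin]

theorem sq_sub_I_mul_add_mul_ne_zero {c s B δ : ℝ} (hB : B ≠ 0) (hδ : δ ≤ 0)
    (hcs : c ≠ 0 ∨ s ≠ 0) : ((c : ℂ) - I * B * s) ^ 2 + (s : ℂ) ^ 2 * δ ≠ 0 := by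
  intro h
  have hre : c ^ 2 - B ^ 2 * s ^ 2 + s ^ 2 * δ = 0 := by
    have := congrArg re h
    simp [sq, mul_re, mul_im] at this
    linear_combination this
  have him : B * c * s = 0 := by
    have := congrArg im h
    simp [sq, mul_re, mul_im] at this
    linear_combination -this / 2
  rcases hcs with hc | hs
  · have hs : s = 0 := by simpa [hB, hc] using him
    subst hs
    exact hc (by simpa using hre)
  · have hc : c = 0 := by simpa [hB, hs] using him
    subst hc
    have : s ^ 2 * (B ^ 2 - δ) = 0 := by linear_combination -hre
    exact (mul_pos (sq_pos_of_ne_zero hs) (by linarith [sq_pos_of_ne_zero hB])).ne' this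

theorem Real.cos_ne_zero_or_sin_div_ne_zero (ω t : ℝ) :
    Real.cos (ω * t) ≠ 0 ∨ Real.sin (ω * t) / ω ≠ 0 := by
  rcases eq_or_ne ω 0 with rfl | hω
  · simp
  · by_contra! ⟨hcos, hsin⟩
    have := Real.sin_sq_add_cos_sq (ω * t)
    simp [hcos, (div_eq_zero_iff.mp hsin).resolve_right hω] at this

theorem Zmat_invertible_general (b ω 𝓑 : ℝ) (h𝓑 : 0 < 𝓑)
    (y : ℝ × ℝ) (η : ℝ × ℝ) :
    ∀ t : ℝ, traj b ω y η t ≠ 0 → IsUnit (Zmat b ω 𝓑 y η t) := by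
  intro t _
  rw [isUnit_iff_isUnit_det, isUnit_iff_ne_zero, det_Zmat]
  exact sq_sub_I_mul_add_mul_ne_zero h𝓑.ne' (det_Amat_nonpos _ _)
    (Real.cos_ne_zero_or_sin_div_ne_zero ω t)

/-- For `𝓑 > 0`, the matrix `Z(t,y,η)` is invertible whenever `x^t(y,η) ≠ 0`. -/
theorem Zmat_invertible (b ω 𝓑 : ℝ) (hω : 0 < ω) (h𝓑 : 0 < 𝓑)
    (y : ℝ × ℝ) (hy : y ≠ 0) (η : ℝ × ℝ) :
    ∀ t : ℝ, traj b ω y η t ≠ 0 → IsUnit (Zmat b ω 𝓑 y η t) :=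
  Zmat_invertible_general b ω 𝓑 h𝓑 y η
end

section
/- Fix b ∈ ℝ and ω > 0. Let t ∈ ℝ with sin(ωt) ≠ 0, let y ∈ ℝ² with y ≠ 0, let x ∈ ℝ², and set η_* := A(y) + (ω/sin(ωt))·(x − cos(ωt)·y). Then ((cos(2ωt) − 1)/2)·(y·η_*) + (sin(2ωt)/(4ω))·(|η_* − A(y)|² − ω²|y|²) = (ω/(2 sin(ωt)))·(cos(ωt)·(|x|² + |y|²) − 2 x·y). (This identifies the non-winding part of the action at the stationary point with the Mehler phase.) -/
/-!
Since `A(y)` is orthogonal to `y`, the stationary covector enters the action only through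
`η_* − A(y) = (ω / sin ωt)(x − cos ωt · y)`. With `cos 2ωt − 1 = −2 sin² ωt` and
`sin 2ωt = 2 sin ωt cos ωt`, the claim becomes a polynomial identity in `x`, `y`, `sin ωt`,
`cos ωt`, which holds modulo `sin² + cos² = 1`.
-/

open Real

lemma dot_add_right (u v w : ℝ × ℝ) : dot u (v + w) = dot u v + dot u w := by
  simp only [dot, Prod.fst_add, Prod.snd_add]
  ring

/-- Holds also at `y = 0`, where `A b 0 = 0` by the convention `r / 0 = 0`. -/
lemma dot_A_self (b : ℝ) (y : ℝ × ℝ) : dot y (A b y) = 0 := by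
  simp only [dot, A]
  ring

lemma mehler_phase_of_sin_cos {ω s c : ℝ} (hω : ω ≠ 0) (hs : s ≠ 0) (hsc : s ^ 2 + c ^ 2 = 1)
    (x y : ℝ × ℝ) :
    -s ^ 2 * dot y ((ω / s) • (x - c • y)) +
        s * c / (2 * ω) * (normSq2 ((ω / s) • (x - c • y)) - ω ^ 2 * normSq2 y) =
      ω / (2 * s) * (c * (normSq2 x + normSq2 y) - 2 * dot x y) := by
  simp only [dot, normSq2, Prod.smul_fst, Prod.smul_snd, Prod.fst_sub, Prod.snd_sub, smul_eq_mul]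
  field_simp
  linear_combination (c * (y.1 ^ 2 + y.2 ^ 2) - 2 * (x.1 * y.1 + x.2 * y.2)) * hsc

theorem mehler_phase_general (b ω : ℝ)
    (t : ℝ) (hst : Real.sin (ω * t) ≠ 0)
    (y : ℝ × ℝ) (x : ℝ × ℝ) :
    ((Real.cos (2 * ω * t) - 1) / 2) *
        dot y (A b y + (ω / Real.sin (ω * t)) • (x - Real.cos (ω * t) • y)) +
      (Real.sin (2 * ω * t) / (4 * ω)) *
        (normSq2 ((A b y + (ω / Real.sin (ω * t)) • (x - Real.cos (ω * t) • y))
            - A b y) - ω ^ 2 * normSq2 y) =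
      (ω / (2 * Real.sin (ω * t))) *
        (Real.cos (ω * t) * (normSq2 x + normSq2 y) - 2 * dot x y) := by
  have hω : ω ≠ 0 := by
    rintro rfl
    simp at hst
  rw [show 2 * ω * t = 2 * (ω * t) by ring, cos_two_mul_eq_one_sub, sin_two_mul,
    dot_add_right, dot_A_self, zero_add, add_sub_cancel_left]
  convert mehler_phase_of_sin_cos hω hst (sin_sq_add_cos_sq (ω * t)) x y using 2 <;> ring

/-- The non-winding part of the action at the stationary point
`η_* = A(y) + (ω/sin(ωt))·(x − cos(ωt)·y)` equals the Mehler phase. -/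
theorem mehler_phase (b ω : ℝ) (hω : 0 < ω)
    (t : ℝ) (hst : Real.sin (ω * t) ≠ 0)
    (y : ℝ × ℝ) (hy : y ≠ 0) (x : ℝ × ℝ) :
    ((Real.cos (2 * ω * t) - 1) / 2) *
        dot y (A b y + (ω / Real.sin (ω * t)) • (x - Real.cos (ω * t) • y)) +
      (Real.sin (2 * ω * t) / (4 * ω)) *
        (normSq2 ((A b y + (ω / Real.sin (ω * t)) • (x - Real.cos (ω * t) • y))
            - A b y) - ω ^ 2 * normSq2 y) =
      (ω / (2 * Real.sin (ω * t))) *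
        (Real.cos (ω * t) * (normSq2 x + normSq2 y) - 2 * dot x y) :=
  mehler_phase_general b ω t hst y x
end
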